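/- arXiv:1307.1521 — 2 statements merged into one kernel-verified Lean document; each statement's English description precedes it below -/
import Mathlib

section
/- limsup_{m→∞} a(m)/h(m) = 1. -/
/-!
Write `J n = (2 ^ n - (-1) ^ n) / 3` (the Jacobsthal numbers), so that `h` is the polygon through
the points `(J n, F n)`. Since `J n + J (n + 1) = 2 ^ n`, the mirror identity
`a (2 ^ r + t) = a (2 ^ r - t) + a t` gives `a (J (n + 2)) = a (J (n + 1)) + a (J n)`, hence
`a (J n) = F n = h (J n)` and the ratio equals `1` infinitely often.

For `a ≤ h` we induct over the dyadic blocks `[2 ^ r, 2 ^ (r + 1))`. On `[2 ^ r, J (r + 2)]` the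
mirror identity gives `a (2 ^ r + t) ≤ F (r + 1) + h t`, and `h t + F (r + 1) ≤ h (2 ^ r + t)`
because on `[0, J r]` the polygon lies below the line through `(0, F r / 2)` and `(J r, F r)`,
which only has to be checked at the vertices. On the rest of the block `a ≤ F (r + 2) ≤ h`.
-/

open Nat Set

def jacobsthal : ℕ → ℕ
  | 0 => 0
  | 1 => 1
  | n + 2 => jacobsthal (n + 1) + 2 * jacobsthal n

namespace jacobsthal

theorem add_succ (n : ℕ) : jacobsthal n + jacobsthal (n + 1) = 2 ^ n := by
  induction n with
  | zero => rfl
  | succ n ih => rw [jacobsthal, pow_succ, ← ih]; ring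

theorem add_two (n : ℕ) : jacobsthal (n + 2) = 2 ^ n + jacobsthal n := by
  rw [jacobsthal, ← add_succ]; ring

theorem le_two_pow (n : ℕ) : jacobsthal n ≤ 2 ^ n :=
  add_succ n ▸ Nat.le_add_right _ _

theorem lt_add_two (n : ℕ) : n < jacobsthal (n + 2) :=
  add_two n ▸ Nat.lt_add_right _ Nat.lt_two_pow_self

theorem pos {n : ℕ} (hn : n ≠ 0) : 0 < jacobsthal n := by
  obtain ⟨n, rfl⟩ := Nat.exists_eq_succ_of_ne_zero hn
  induction n with
  | zero => decide
  | succ n ih => rw [jacobsthal]; exact Nat.lt_add_right _ (ih n.succ_ne_zero)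

theorem cast_eq (n : ℕ) : (jacobsthal n : ℝ) = (2 ^ n - (-1) ^ n) / 3 := by
  induction n with
  | zero => simp [jacobsthal]
  | succ n ih =>
    have h : (jacobsthal n : ℝ) + jacobsthal (n + 1) = 2 ^ n := by exact_mod_cast add_succ n
    rw [pow_succ, pow_succ]
    linarith

theorem three_mul_le (n : ℕ) : 3 * jacobsthal n ≤ 2 ^ n + 1 := by
  have : ((3 * jacobsthal n : ℕ) : ℝ) ≤ ((2 ^ n + 1 : ℕ) : ℝ) := by
    push_cast [cast_eq]
    rcases neg_one_pow_eq_or ℝ n with h | h <;> rw [h] <;> linarith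
  exact_mod_cast this

theorem monotone : Monotone jacobsthal := by
  refine monotone_nat_of_le_succ fun n => ?_
  cases n with
  | zero => decide
  | succ n => rw [jacobsthal]; exact Nat.le_add_right _ _

theorem exists_mem_Icc {x : ℝ} (hx₀ : 0 ≤ x) (r : ℕ) (hx : x ≤ jacobsthal (r + 1)) :
    ∃ n ≤ r, x ∈ Icc (jacobsthal n : ℝ) (jacobsthal (n + 1)) := by
  induction r with
  | zero => exact ⟨0, le_rfl, by simpa [jacobsthal] using hx₀, hx⟩
  | succ r ih =>
    obtain hle | hlt := le_or_gt x (jacobsthal (r + 1))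
    · obtain ⟨n, hn, hmem⟩ := ih hle
      exact ⟨n, hn.trans r.le_succ, hmem⟩
    · exact ⟨r + 1, le_rfl, hlt.le, hx⟩

end jacobsthal

theorem three_mul_fib_le {i : ℕ} (hi : 2 ≤ i) : 3 * fib i ≤ 2 * fib (i + 1) := by
  obtain ⟨k, rfl⟩ := Nat.exists_eq_add_of_le' hi
  have h2 : fib (k + 2) = fib k + fib (k + 1) := fib_add_two
  have h3 : fib (k + 2 + 1) = fib (k + 1) + fib (k + 2) := fib_add_two
  have := fib_le_fib_succ (n := k)
  omega

theorem two_mul_fib_le_fib {i r : ℕ} (hir : i + 2 ≤ r) : 2 * fib i ≤ fib r := by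
  have := fib_add_two (n := i)
  have := fib_le_fib_succ (n := i)
  have := fib_mono hir
  omega

theorem two_mul_fib_mul_jacobsthal_le {i r : ℕ} (hir : i ≤ r) :
    2 * fib i * jacobsthal r ≤ fib r * (jacobsthal r + jacobsthal i) := by
  obtain rfl | rfl | hir := (show r = i ∨ r = i + 1 ∨ i + 2 ≤ r by omega)
  · exact (by ring : _ = _).le
  · obtain hi | rfl | hi := (show i = 0 ∨ i = 1 ∨ 2 ≤ i by omega)
    · simp [hi]
    · decide
    have hF := three_mul_fib_le hi
    have hJ := jacobsthal.three_mul_le (i + 1)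
    have hsum := jacobsthal.add_succ i
    have h4 : 4 ≤ 2 ^ i := by simpa using Nat.pow_le_pow_right two_pos hi
    rw [pow_succ] at hJ
    rw [add_comm (jacobsthal _), hsum]
    nlinarith
  · calc 2 * fib i * jacobsthal r ≤ fib r * jacobsthal r := by
          gcongr; exact two_mul_fib_le_fib hir
      _ ≤ fib r * (jacobsthal r + jacobsthal i) := by gcongr; exact le_self_add

structure IsSternDiatomic (a : ℕ → ℕ) : Prop where
  zero : a 0 = 0
  one : a 1 = 1
  double : ∀ n, a (2 * n) = a n
  double_add_one : ∀ n, a (2 * n + 1) = a n + a (n + 1)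

namespace IsSternDiatomic

variable {a : ℕ → ℕ} (ha : IsSternDiatomic a)
include ha

theorem two_pow_add (r : ℕ) {t : ℕ} (ht : t ≤ 2 ^ r) :
    a (2 ^ r + t) = a (2 ^ r - t) + a t := by
  induction r generalizing t with
  | zero =>
    interval_cases t
    · simp [ha.zero]
    · simpa [ha.zero, ha.one] using ha.double 1
  | succ r ih =>
    rw [pow_succ'] at ht ⊢
    obtain ⟨u, rfl | rfl⟩ := Nat.even_or_odd' t
    · rw [← mul_add, ← Nat.mul_sub, ha.double, ha.double, ha.double, ih (by omega)]
    · have hodd : 2 * 2 ^ r - (2 * u + 1) = 2 * (2 ^ r - (u + 1)) + 1 := by omega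
      rw [show 2 * 2 ^ r + (2 * u + 1) = 2 * (2 ^ r + u) + 1 by ring, hodd,
        ha.double_add_one, ha.double_add_one, ha.double_add_one, add_assoc (2 ^ r),
        ih (by omega), ih (by omega), show 2 ^ r - (u + 1) + 1 = 2 ^ r - u by omega]
      ring

theorem jacobsthal_eq_fib (n : ℕ) : a (jacobsthal n) = fib n := by
  induction n using Nat.twoStepInduction with
  | zero => exact ha.zero
  | one => exact ha.one
  | more n ih₀ ih₁ =>
    have hsub : 2 ^ n - jacobsthal n = jacobsthal (n + 1) := by
      have := jacobsthal.add_succ n; omega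
    rw [jacobsthal.add_two, ha.two_pow_add n (jacobsthal.le_two_pow n), hsub, ih₀, ih₁,
      fib_add_two, add_comm]

theorem le_fib (r : ℕ) :
    (∀ m ≤ 2 ^ r, a m ≤ fib (r + 1)) ∧ ∀ m < 2 ^ r, a m + a (m + 1) ≤ fib (r + 2) := by
  induction r with
  | zero =>
    refine ⟨fun m hm => ?_, fun m hm => ?_⟩ <;> interval_cases m
    all_goals simp [ha.zero, ha.one]
  | succ r ih =>
    obtain ⟨hval, hpair⟩ := ih
    have hfib : fib (r + 1 + 2) = fib (r + 1) + fib (r + 2) := fib_add_two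
    have hmono : fib (r + 1) ≤ fib (r + 2) := fib_le_fib_succ
    rw [pow_succ']
    refine ⟨fun m hm => ?_, fun m hm => ?_⟩ <;> obtain ⟨u, rfl | rfl⟩ := Nat.even_or_odd' m
    · rw [ha.double]; exact (hval u (by omega)).trans hmono
    · rw [ha.double_add_one]; exact hpair u (by omega)
    · rw [ha.double_add_one, ha.double]
      have := hval u (by omega); have := hpair u (by omega); omega
    · rw [show 2 * u + 1 + 1 = 2 * (u + 1) by ring, ha.double_add_one, ha.double]
      have := hval (u + 1) (by omega); have := hpair u (by omega); omega

end IsSternDiatomic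

theorem add_mul_div_le_of_mem_Icc {p q x u v c d : ℝ} (hx : x ∈ Icc p q)
    (hu : u ≤ c + d * p) (hv : v ≤ c + d * q) :
    u + (v - u) * (x - p) / (q - p) ≤ c + d * x := by
  obtain rfl | hpx := hx.1.eq_or_lt
  · simpa using hu
  have hpq : 0 < q - p := by linarith [hx.2]
  set θ := (x - p) / (q - p) with hθ
  have hθ0 : 0 ≤ θ := div_nonneg (by linarith) hpq.le
  have hθ1 : θ ≤ 1 := (div_le_one hpq).2 (by linarith [hx.2])
  have hxθ : x = p + θ * (q - p) := by rw [hθ]; field_simp; ring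
  rw [mul_div_assoc, ← hθ, hxθ]
  nlinarith [mul_le_mul_of_nonneg_left hv hθ0, mul_le_mul_of_nonneg_left hu (sub_nonneg.2 hθ1)]

/-- The piece `n = 1` is the single point `x = 1`, where the formula gives `fib 1` whatever
`x / 0` is. -/
def InterpolatesFibAtJacobsthal (h : ℝ → ℝ) : Prop :=
  ∀ n : ℕ, ∀ x ∈ Icc (jacobsthal n : ℝ) (jacobsthal (n + 1)),
    h x = fib n + ((fib (n + 1) : ℝ) - fib n) * (x - jacobsthal n) /
      (jacobsthal (n + 1) - jacobsthal n)

namespace InterpolatesFibAtJacobsthal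

variable {h : ℝ → ℝ} (hh : InterpolatesFibAtJacobsthal h)
include hh

theorem apply_jacobsthal (n : ℕ) : h (jacobsthal n) = fib n := by
  have hmem : (jacobsthal n : ℝ) ∈ Icc (jacobsthal n : ℝ) (jacobsthal (n + 1)) :=
    ⟨le_rfl, by exact_mod_cast jacobsthal.monotone n.le_succ⟩
  simp [hh n _ hmem]

theorem fib_le {n : ℕ} {x : ℝ} (hx : x ∈ Icc (jacobsthal n : ℝ) (jacobsthal (n + 1))) :
    (fib n : ℝ) ≤ h x := by
  rw [hh n x hx, le_add_iff_nonneg_right]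
  have hfib : (fib n : ℝ) ≤ fib (n + 1) := by exact_mod_cast fib_le_fib_succ
  have hJ : (jacobsthal n : ℝ) ≤ jacobsthal (n + 1) := by
    exact_mod_cast jacobsthal.monotone n.le_succ
  exact div_nonneg (mul_nonneg (by linarith) (by linarith [hx.1])) (by linarith)

theorem le_line {r : ℕ} (hr : 1 ≤ r) {x : ℝ} (hx : x ∈ Icc 0 (jacobsthal r : ℝ)) :
    h x ≤ fib r / 2 + fib r / (2 * jacobsthal r) * x := by
  have hJ : (0 : ℝ) < jacobsthal r := by exact_mod_cast jacobsthal.pos (by omega)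
  have hvertex : ∀ i ≤ r,
      (fib i : ℝ) ≤ fib r / 2 + fib r / (2 * jacobsthal r) * jacobsthal i := by
    intro i hi
    have key : ((2 * fib i * jacobsthal r : ℕ) : ℝ) ≤
        (fib r * (jacobsthal r + jacobsthal i) : ℕ) := by
      exact_mod_cast two_mul_fib_mul_jacobsthal_le hi
    push_cast at key
    rw [div_mul_eq_mul_div, div_add_div _ _ two_ne_zero (by positivity),
      le_div_iff₀ (by positivity)]
    nlinarith
  obtain ⟨n, hn, hmem⟩ :=
    jacobsthal.exists_mem_Icc hx.1 (r - 1) (by rw [Nat.sub_add_cancel hr]; exact hx.2)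
  rw [hh n x hmem]
  exact add_mul_div_le_of_mem_Icc hmem (hvertex n (by omega)) (hvertex (n + 1) (by omega))

theorem add_fib_le {r : ℕ} (hr : 1 ≤ r) {x : ℝ} (hx : x ∈ Icc 0 (jacobsthal r : ℝ)) :
    h x + fib (r + 1) ≤ h (2 ^ r + x) := by
  have hJ : (0 : ℝ) < jacobsthal r := by exact_mod_cast jacobsthal.pos (by omega)
  have hJ₁ : (jacobsthal (r + 1) : ℝ) = 2 ^ r - jacobsthal r := by
    rw [eq_sub_iff_add_eq']; exact_mod_cast jacobsthal.add_succ r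
  have hJ₂ : (jacobsthal (r + 2) : ℝ) = 2 ^ r + jacobsthal r := by
    exact_mod_cast jacobsthal.add_two r
  have hF : (fib (r + 2) : ℝ) = fib r + fib (r + 1) := by exact_mod_cast fib_add_two
  have hmem : 2 ^ r + x ∈ Icc (jacobsthal (r + 1) : ℝ) (jacobsthal (r + 2)) := by
    rw [hJ₁, hJ₂]; constructor <;> linarith [hx.1, hx.2]
  have hslope : ((fib r : ℝ) + fib (r + 1) - fib (r + 1)) * (2 ^ r + x - (2 ^ r - jacobsthal r)) /
      (2 ^ r + jacobsthal r - (2 ^ r - jacobsthal r)) =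
        fib r / 2 + fib r / (2 * jacobsthal r) * x := by
    rw [show (2 : ℝ) ^ r + jacobsthal r - (2 ^ r - jacobsthal r) = 2 * jacobsthal r by ring]
    field_simp
    ring
  rw [hh (r + 1) _ hmem, hJ₁, hJ₂, hF, hslope]
  linarith [hh.le_line hr hx]

end InterpolatesFibAtJacobsthal

theorem InterpolatesFibAtJacobsthal.of_pieces {M : ℕ → ℝ}
    (hM : ∀ n : ℕ, M n = (2 ^ n - (-1) ^ n) / 3) {h : ℝ → ℝ}
    (h01 : ∀ x ∈ Icc (0 : ℝ) 1, h x = x)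
    (hlin : ∀ n : ℕ, 2 ≤ n → ∀ x ∈ Icc (M n) (M (n + 1)),
      h x = (fib n : ℝ) + ((fib (n + 1) : ℝ) - (fib n : ℝ)) * (x - M n) / (M (n + 1) - M n)) :
    InterpolatesFibAtJacobsthal h := by
  have hMJ : ∀ n, M n = jacobsthal n := fun n => by rw [hM, jacobsthal.cast_eq]
  intro n x hx
  obtain rfl | rfl | hn := (show n = 0 ∨ n = 1 ∨ 2 ≤ n by omega)
  · simp_all [jacobsthal]
  · obtain rfl : x = 1 := by simp_all [jacobsthal]
    simp [jacobsthal, h01]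
  · rw [← hMJ, ← hMJ] at hx ⊢
    exact hlin n hn x hx

namespace IsSternDiatomic

variable {a : ℕ → ℕ} {h : ℝ → ℝ} (ha : IsSternDiatomic a)
  (hh : InterpolatesFibAtJacobsthal h)
include ha hh

theorem two_pow_add_le_of_interpolates {r : ℕ} (hr : 1 ≤ r)
    (ih : ∀ m < 2 ^ r, (a m : ℝ) ≤ h m) {t : ℕ} (ht : t < 2 ^ r) :
    (a (2 ^ r + t) : ℝ) ≤ h (2 ^ r + t : ℕ) := by
  obtain htJ | htJ := le_or_gt t (jacobsthal r)
  · have hrow : a (2 ^ r - t) ≤ fib (r + 1) := (ha.le_fib r).1 _ (Nat.sub_le _ _)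
    have hnode := hh.add_fib_le hr ⟨t.cast_nonneg, by exact_mod_cast htJ⟩
    rw [ha.two_pow_add r ht.le]
    push_cast at hnode ⊢
    linarith [ih t ht, (Nat.cast_le (α := ℝ)).2 hrow]
  · have hrow : a (2 ^ r + t) ≤ fib (r + 2) := (ha.le_fib (r + 1)).1 _ (by rw [pow_succ]; omega)
    have hmem :
        ((2 ^ r + t : ℕ) : ℝ) ∈ Icc (jacobsthal (r + 2) : ℝ) (jacobsthal (r + 2 + 1)) := by
      have h₂ := jacobsthal.add_two r
      have h₃ : jacobsthal (r + 2 + 1) = 2 ^ (r + 1) + jacobsthal (r + 1) := jacobsthal.add_two _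
      rw [pow_succ] at h₃
      constructor <;> norm_cast <;> omega
    exact ((Nat.cast_le (α := ℝ)).2 hrow).trans (hh.fib_le hmem)

theorem le_of_interpolates (m : ℕ) : (a m : ℝ) ≤ h m := by
  suffices ∀ r, ∀ m < 2 ^ (r + 1), (a m : ℝ) ≤ h m from this m m
    (Nat.lt_two_pow_self.trans_le (Nat.pow_le_pow_right two_pos m.le_succ))
  intro r
  induction r with
  | zero =>
    intro m hm
    interval_cases m
    · simpa [ha.zero, jacobsthal] using (hh.apply_jacobsthal 0).ge
    · simpa [ha.one, jacobsthal] using (hh.apply_jacobsthal 1).ge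
  | succ r ih =>
    intro m hm
    obtain hlt | hge := lt_or_ge m (2 ^ (r + 1))
    · exact ih m hlt
    obtain ⟨t, rfl⟩ := Nat.exists_eq_add_of_le hge
    exact ha.two_pow_add_le_of_interpolates hh r.succ_pos ih (by rw [pow_succ] at hm; omega)

end IsSternDiatomic

/-- `limsup_{m→∞} a(m)/h(m) = 1`. -/
theorem limsup_stern_div_h
    (a : ℕ → ℕ) (ha0 : a 0 = 0) (ha1 : a 1 = 1)
    (haeven : ∀ n, 1 ≤ n → a (2 * n) = a n)
    (haodd : ∀ n, 1 ≤ n → a (2 * n + 1) = a n + a (n + 1))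
    (M : ℕ → ℝ) (hM : ∀ n : ℕ, M n = (2 ^ n - (-1) ^ n) / 3)
    (h : ℝ → ℝ)
    (h01 : ∀ x ∈ Set.Icc (0 : ℝ) 1, h x = x)
    (hlin : ∀ n : ℕ, 2 ≤ n → ∀ x ∈ Set.Icc (M n) (M (n + 1)),
      h x = (Nat.fib n : ℝ) +
        ((Nat.fib (n + 1) : ℝ) - (Nat.fib n : ℝ)) * (x - M n) / (M (n + 1) - M n)) :
    Filter.limsup (fun k : ℕ => (a k : ℝ) / h k) Filter.atTop = 1 := by
  have ha : IsSternDiatomic a :=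
    { zero := ha0
      one := ha1
      double := fun n => n.eq_zero_or_pos.elim (fun hn => by rw [hn]) (haeven n)
      double_add_one := fun n => n.eq_zero_or_pos.elim (fun hn => by simp [hn, ha0]) (haodd n) }
  have hh := InterpolatesFibAtJacobsthal.of_pieces hM h01 hlin
  have hle : ∀ k : ℕ, (a k : ℝ) / h k ≤ 1 := fun k =>
    have hak := ha.le_of_interpolates hh k
    div_le_one_of_le₀ hak ((Nat.cast_nonneg _).trans hak)
  have hfreq : ∃ᶠ k in Filter.atTop, 1 ≤ (a k : ℝ) / h k := by
    refine Filter.frequently_atTop.2 fun N =>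
      ⟨jacobsthal (N + 2), (jacobsthal.lt_add_two N).le, ?_⟩
    have hfib : (Nat.fib (N + 2) : ℝ) ≠ 0 := by exact_mod_cast (Nat.fib_pos.2 (by omega)).ne'
    rw [ha.jacobsthal_eq_fib, hh.apply_jacobsthal, div_self hfib]
  exact le_antisymm (Filter.limsup_le_of_le (.of_frequently_ge hfreq) (.of_forall hle))
    (Filter.le_limsup_of_frequently_le hfreq (Filter.isBoundedUnder_of ⟨1, hle⟩))
end

section
/- The sequence n ↦ F_n / ((φ^{log₂ 3}/√5)·m_n^{log₂ φ}) tends to 1 as n → ∞. -/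
/-!
Binet's formula gives `F_n √5 / φⁿ = 1 - (ψ/φ)ⁿ → 1`. With `c = log₂ φ` one has `φ^(log₂ 3) = 3^c`
and `(2ⁿ)^c = φⁿ`, so, writing `2ⁿ - (-1)ⁿ = 2ⁿ (1 - (-1/2)ⁿ)`, the denominator equals
`φⁿ (1 - (-1/2)ⁿ)^c / √5`, whose second factor tends to `1`.
-/

open Filter Topology Real goldenRatio

theorem Real.rpow_logb_comm {b x y : ℝ} (hb : 0 < b) (hb₁ : b ≠ 1) (hx : 0 < x) (hy : 0 < y) :
    x ^ logb b y = y ^ logb b x := by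
  conv_lhs => rw [← rpow_logb hb hb₁ hx]
  conv_rhs => rw [← rpow_logb hb hb₁ hy]
  rw [← rpow_mul hb.le, ← rpow_mul hb.le, mul_comm]

theorem Real.pow_rpow_logb {b x : ℝ} (hb : 0 < b) (hb₁ : b ≠ 1) (hx : 0 < x) (n : ℕ) :
    (b ^ n) ^ logb b x = x ^ n := by
  rw [rpow_logb_comm hb hb₁ (pow_pos hb n) hx, ← rpow_natCast b n, logb_rpow hb hb₁, rpow_natCast]

theorem tendsto_one_sub_pow_rpow {r : ℝ} (hr : |r| < 1) (c : ℝ) :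
    Tendsto (fun n : ℕ => (1 - r ^ n) ^ c) atTop (𝓝 1) := by
  have h := ((tendsto_pow_atTop_nhds_zero_of_abs_lt_one hr).const_sub 1).rpow_const
    (p := c) (Or.inl (by norm_num))
  simpa using h

theorem abs_goldenConj_div_goldenRatio_lt_one : |ψ / φ| < 1 := by
  rw [abs_div, abs_of_pos goldenRatio_pos, div_lt_one goldenRatio_pos,
    abs_of_neg goldenConj_neg]
  linarith [neg_one_lt_goldenConj, one_lt_goldenRatio]

theorem fib_mul_sqrt_five_div_goldenRatio_pow (n : ℕ) :
    (Nat.fib n : ℝ) * √5 / φ ^ n = 1 - (ψ / φ) ^ n := by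
  rw [div_pow ψ φ n, coe_fib_eq, div_mul_cancel₀ _ (by positivity), sub_div,
    div_self (pow_ne_zero n goldenRatio_ne_zero)]

theorem tendsto_fib_mul_sqrt_five_div_goldenRatio_pow :
    Tendsto (fun n : ℕ => (Nat.fib n : ℝ) * √5 / φ ^ n) atTop (𝓝 1) := by
  simpa [fib_mul_sqrt_five_div_goldenRatio_pow] using
    tendsto_one_sub_pow_rpow abs_goldenConj_div_goldenRatio_lt_one 1

theorem goldenRatio_rpow_logb_two_three_mul_rpow (n : ℕ) :
    φ ^ logb 2 3 / √5 * ((2 ^ n - (-1) ^ n) / 3) ^ logb 2 φ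
      = φ ^ n * (1 - (-1 / 2) ^ n) ^ logb 2 φ / √5 := by
  have hsplit : (2 : ℝ) ^ n - (-1) ^ n = 2 ^ n * (1 - (-1 / 2) ^ n) := by
    rw [div_pow]; field_simp
  have hnonneg : (0 : ℝ) ≤ 1 - (-1 / 2) ^ n := by
    rw [sub_nonneg]
    exact (le_abs_self _).trans (by rw [abs_pow]; exact pow_le_one₀ (by positivity) (by norm_num))
  have h3 : (3 : ℝ) ^ logb 2 φ ≠ 0 := by positivity
  rw [hsplit, div_rpow (mul_nonneg (by positivity) hnonneg) zero_le_three,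
    mul_rpow (by positivity) hnonneg,
    pow_rpow_logb two_pos (by norm_num) goldenRatio_pos,
    rpow_logb_comm two_pos (by norm_num) goldenRatio_pos three_pos]
  field_simp

/-- `F_n / ((φ^(log₂ 3)/√5)·m_n^(log₂ φ)) → 1` as `n → ∞`. -/
theorem fib_div_power_tendsto_one
    (M : ℕ → ℝ) (hM : ∀ n : ℕ, M n = (2 ^ n - (-1) ^ n) / 3) :
    Filter.Tendsto
      (fun n : ℕ => (Nat.fib n : ℝ) /
        ((((1 + Real.sqrt 5) / 2) ^ (Real.logb 2 3) / Real.sqrt 5)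
          * M n ^ (Real.logb 2 ((1 + Real.sqrt 5) / 2))))
      Filter.atTop (nhds 1) := by
  have h := tendsto_fib_mul_sqrt_five_div_goldenRatio_pow.div
    (tendsto_one_sub_pow_rpow (r := -1 / 2) (by norm_num [abs_div]) (logb 2 φ)) one_ne_zero
  rw [div_one] at h
  refine h.congr fun n => ?_
  rw [Pi.div_apply, hM n, goldenRatio_rpow_logb_two_three_mul_rpow,
    div_div_eq_mul_div, div_div]
end
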